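/- Let τ ∈ (0,1), N ≥ 1, and let p1, p2 ≥ 0 be integers. Then the spectral moment of the complex elliptic Ginibre ensemble satisfies the Christoffel–Darboux-type identity M_τ(p1,p2,N) = (1/((1−τ²)·(p1+1))) · Σ_{n=0}^{N+max(p1+1,p2)} (n!/(N−1)!) · [ A_τ(p1+1, n, N−1)·A_τ(p2, n, N) − τ·A_τ(p1+1, n, N)·A_τ(p2, n, N−1) ]. -/

import Mathlib

/-!
Encode `∑ c_j P_j`, where `P_0 = 1` and `P_{j+1} = z P_j - τ j P_{j-1}`, as `∑ c_j X^j`. Then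
`A_τ(p, ·, k)` is the coefficient vector of `z^p P_k`, multiplication by `z` becomes
`f ↦ X f + τ f'`, differentiation stays differentiation (`P_j' = j P_{j-1}`), and `∑ n! c_n d_n`
is the Fischer pairing `⟨f, g⟩ = (f(∂) g)(0)`, for which multiplication by `X` is adjoint to `∂`.
For `F_M = ⟨z^{p1+1} P_M, z^{p2} P_{M+1}⟩ - τ ⟨z^{p1+1} P_{M+1}, z^{p2} P_M⟩`, the three-term
recurrence, this adjointness and `∂ z = z ∂ + 1` give
`F_M = (1 - τ²)(p1 + 1) ⟨z^{p1} P_M, z^{p2} P_M⟩ + M F_{M-1}`, and dividing by `M!` telescopes.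
The explicit formula for `A_τ` enters only through the recurrence
`A_τ(p+1, j, k) = A_τ(p, j-1, k) + τ (j+1) A_τ(p, j+1, k)`.
-/

open Finset Filter

/-- `1/n!` for an integer `n`, with the convention that `1/n! = 0` for negative `n`. -/
noncomputable def invfac (n : ℤ) : ℝ := if 0 ≤ n then ((n.toNat).factorial : ℝ)⁻¹ else 0

/-- Binomial coefficient `binom(n, m)` for `n : ℕ`, `m : ℤ`, zero for `m < 0` or `m > n`. -/
noncomputable def zbinom (n : ℕ) (m : ℤ) : ℝ :=
  if 0 ≤ m ∧ m ≤ (n : ℤ) then (n.choose m.toNat : ℝ) else 0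

/-- The Hermite expansion coefficients `A_τ(p, j, k)`. -/
noncomputable def Aher (τ : ℝ) (p : ℕ) (j : ℤ) (k : ℕ) : ℝ :=
  if 0 ≤ j ∧ |j - (k : ℤ)| ≤ (p : ℤ) ∧ (j - (k : ℤ)) % 2 = (p : ℤ) % 2 then
    τ ^ ((((p : ℤ) + k - j) / 2).toNat) *
      ∑ l ∈ Finset.range (p / 2 + 1),
        (p.factorial : ℝ) * ((2 : ℝ) ^ l * (l.factorial : ℝ))⁻¹ *
          invfac (((p : ℤ) - k + j) / 2 - l) *
          zbinom k (((p : ℤ) + k - j) / 2 - l)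
  else 0

/-- `I_p = {−p, −p+2, …, p−2, p}`, the integers between `−p` and `p` with the parity of `p`. -/
noncomputable def Ip (p : ℕ) : Finset ℤ :=
  (Finset.Icc (-(p : ℤ)) (p : ℤ)).filter fun r => r % 2 = (p : ℤ) % 2

/-- The spectral moment `M_τ(p1, p2, N)` of the complex elliptic Ginibre ensemble. -/
noncomputable def Mell (τ : ℝ) (p1 p2 N : ℕ) : ℝ :=
  ∑ k ∈ Finset.range N,
    ∑ r ∈ (Ip (min p1 p2)).filter (fun r => r ≤ (k : ℤ)),
      ((((k : ℤ) - r).toNat.factorial : ℝ) / (k.factorial : ℝ)) *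
        Aher τ p1 ((k : ℤ) - r) k * Aher τ p2 ((k : ℤ) - r) k

open Polynomial
open scoped Nat

theorem invfac_natCast (n : ℕ) : invfac n = (n ! : ℝ)⁻¹ := by
  simp [invfac]

theorem invfac_of_neg {x : ℤ} (h : x < 0) : invfac x = 0 := by
  rw [invfac, if_neg h.not_ge]

theorem invfac_sub_one (x : ℤ) : invfac (x - 1) = x * invfac x := by
  rcases lt_trichotomy x 0 with hx | rfl | hx
  · rw [invfac_of_neg (by omega), invfac_of_neg hx, mul_zero]
  · rw [invfac_of_neg (by omega), Int.cast_zero, zero_mul]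
  · lift x to ℕ using hx.le
    obtain ⟨n, rfl⟩ := Nat.exists_eq_add_one_of_ne_zero (by omega : x ≠ 0)
    rw [show ((n + 1 : ℕ) : ℤ) - 1 = n by omega, invfac_natCast, invfac_natCast,
      Nat.factorial_succ]
    push_cast
    field_simp

theorem zbinom_natCast (k n : ℕ) : zbinom k n = k.choose n := by
  rw [zbinom]
  split_ifs with h
  · rw [Int.toNat_natCast]
  · rw [Nat.choose_eq_zero_of_lt (by omega), Nat.cast_zero]

theorem invfac_mul_zbinom_eq_zero {a b : ℤ} {k : ℕ} (h : a < 0 ∨ b < 0 ∨ (k : ℤ) < b) :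
    invfac a * zbinom k b = 0 := by
  rcases h with h | h
  · rw [invfac_of_neg h, zero_mul]
  · rw [zbinom, if_neg (by omega), mul_zero]

theorem sub_mul_zbinom (k : ℕ) (m : ℤ) :
    ((k : ℝ) - m) * zbinom k m = ((m : ℝ) + 1) * zbinom k (m + 1) := by
  rcases lt_or_ge m 0 with hm | hm
  · rw [zbinom, if_neg (by omega), mul_zero]
    rcases eq_or_lt_of_le (Int.add_one_le_iff.mpr hm) with h | h
    · rw [(eq_sub_of_add_eq h : m = -1)]; norm_num
    · rw [zbinom, if_neg (by omega), mul_zero]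
  · lift m to ℕ using hm
    have hc := Nat.choose_succ_right_eq k m
    rw [← Nat.cast_succ, zbinom_natCast, zbinom_natCast]
    push_cast
    rcases le_or_gt m k with hmk | hmk
    · rw [← Nat.cast_sub hmk]
      exact_mod_cast (mul_comm _ _).trans (hc.symm.trans (mul_comm _ _))
    · rw [Nat.choose_eq_zero_of_lt hmk, Nat.choose_eq_zero_of_lt (by omega)]
      simp

noncomputable def AherTerm (p : ℕ) (e : ℤ) (k l : ℕ) : ℝ :=
  (p.factorial : ℝ) * ((2 : ℝ) ^ l * (l.factorial : ℝ))⁻¹ * invfac ((p : ℤ) - e - l) *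
    zbinom k (e - l)

noncomputable def AherSum (p : ℕ) (e : ℤ) (k : ℕ) : ℝ :=
  ∑ l ∈ range (p / 2 + 1), AherTerm p e k l

theorem AherTerm_eq_zero {p k l : ℕ} {e : ℤ}
    (h : (p : ℤ) - e - l < 0 ∨ e - l < 0 ∨ (k : ℤ) < e - l) : AherTerm p e k l = 0 := by
  rw [AherTerm, mul_assoc, invfac_mul_zbinom_eq_zero h, mul_zero]

theorem AherSum_eq_zero {p k : ℕ} {e : ℤ}
    (h : ∀ l : ℕ, (p : ℤ) - e - l < 0 ∨ e - l < 0 ∨ (k : ℤ) < e - l) : AherSum p e k = 0 :=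
  sum_eq_zero fun l _ => AherTerm_eq_zero (h l)

theorem AherSum_eq_sum_range {p k n : ℕ} (e : ℤ) (hn : p / 2 < n) :
    AherSum p e k = ∑ l ∈ range n, AherTerm p e k l := by
  refine sum_subset (range_subset_range.2 (by omega)) fun l _ hl => AherTerm_eq_zero ?_
  rw [mem_range] at hl
  omega

theorem AherSum_succ (p k : ℕ) (e : ℤ) :
    AherSum (p + 1) e k = AherSum p e k + ((p : ℝ) + k + 2 - 2 * e) * AherSum p (e - 1) k := by
  set c : ℕ → ℝ := fun l => (p.factorial : ℝ) * ((2 : ℝ) ^ l * (l.factorial : ℝ))⁻¹ with hc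
  have hinv (l : ℕ) :
      invfac ((p : ℤ) - e - l) = ((p : ℝ) + 1 - e - l) * invfac ((p : ℤ) + 1 - e - l) := by
    rw [show (p : ℤ) - e - l = (p + 1 - e - l) - 1 by ring, invfac_sub_one]
    push_cast
    ring
  -- `(p + 1)! = p! * ((p + 1 - e - l) + (e - l) + 2 l)`, split into three sums
  set u : ℕ → ℝ := fun l =>
    ((e : ℝ) - l) * c l * invfac ((p : ℤ) + 1 - e - l) * zbinom k (e - l)
  set v : ℕ → ℝ := fun l =>
    (2 * l : ℝ) * c l * invfac ((p : ℤ) + 1 - e - l) * zbinom k (e - l)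
  set w : ℕ → ℝ := fun l => c l * invfac ((p : ℤ) - e - l) * zbinom k (e - 1 - l)
  have hsplit (l : ℕ) : AherTerm (p + 1) e k l = AherTerm p e k l + u l + v l := by
    simp only [AherTerm, hc, u, v, hinv, Nat.factorial_succ]
    push_cast
    ring_nf
  have hshift : ∑ l ∈ range (p + 2), v l = ∑ l ∈ range (p + 2), w l := by
    rw [sum_range_succ' v, sum_range_succ w]
    have hw : w (p + 1) = 0 := by
      simp only [w, mul_assoc]
      rw [invfac_mul_zbinom_eq_zero (by omega), mul_zero]
    simp only [hw, v, Nat.cast_zero, mul_zero, zero_mul, add_zero]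
    refine sum_congr rfl fun l _ => ?_
    simp only [w, hc, Nat.factorial_succ, pow_succ]
    rw [show (p : ℤ) + 1 - e - ((l + 1 : ℕ) : ℤ) = p - e - l by push_cast; ring,
      show e - ((l + 1 : ℕ) : ℤ) = e - 1 - l by push_cast; ring]
    push_cast
    field_simp
  have hcombine (l : ℕ) : u l + w l = ((p : ℝ) + k + 2 - 2 * e) * AherTerm p (e - 1) k l := by
    have h := sub_mul_zbinom k (e - 1 - l)
    rw [show e - 1 - (l : ℤ) + 1 = e - l by ring] at h
    simp only [u, w, AherTerm, hinv, show (p : ℤ) - (e - 1) - l = p + 1 - e - l by ring]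
    push_cast at h
    linear_combination -(c l * invfac ((p : ℤ) + 1 - e - l)) * h
  rw [AherSum_eq_sum_range (n := p + 2) e (by omega),
    AherSum_eq_sum_range (n := p + 2) e (by omega),
    AherSum_eq_sum_range (n := p + 2) (e - 1) (by omega), sum_congr rfl fun l _ => hsplit l,
    sum_add_distrib, sum_add_distrib, hshift, add_assoc, ← sum_add_distrib,
    sum_congr rfl fun l _ => hcombine l, mul_sum]

theorem Aher_eq_pow_mul_AherSum (τ : ℝ) (p k e : ℕ) :
    Aher τ p ((p : ℤ) + k - 2 * e) k = τ ^ e * AherSum p e k := by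
  rw [Aher]
  split_ifs with h
  · rw [show ((p : ℤ) - k + (p + k - 2 * e)) / 2 = p - e by omega,
      show ((p : ℤ) + k - (p + k - 2 * e)) / 2 = e by omega, Int.toNat_natCast]
    rfl
  · rw [abs_le] at h
    rw [AherSum_eq_zero fun l => by omega, mul_zero]

theorem Aher_of_neg {τ : ℝ} {p k : ℕ} {j : ℤ} (h : j < 0) : Aher τ p j k = 0 := by
  rw [Aher, if_neg fun h' => h.not_ge h'.1]

theorem Aher_eq_zero_of_forall_ne {τ : ℝ} {p k : ℕ} {j : ℤ}
    (h : ∀ e : ℕ, j ≠ p + k - 2 * e) : Aher τ p j k = 0 := by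
  rw [Aher, if_neg]
  rintro ⟨-, habs, hpar⟩
  rw [abs_le] at habs
  exact h ((p + k - j) / 2).toNat (by omega)

theorem Aher_succ (τ : ℝ) (p k : ℕ) (j : ℤ) :
    Aher τ (p + 1) j k = Aher τ p (j - 1) k + τ * (j + 1) * Aher τ p (j + 1) k := by
  by_cases h : ∃ e : ℕ, j = (p + 1 : ℕ) + k - 2 * e
  · obtain ⟨e, rfl⟩ := h
    rcases e with _ | e
    · rw [Aher_eq_zero_of_forall_ne (j := _ + 1) fun e => by omega,
        show ((p + 1 : ℕ) : ℤ) + k - 2 * (0 : ℕ) - 1 = p + k - 2 * (0 : ℕ) by push_cast; ring,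
        Aher_eq_pow_mul_AherSum, Aher_eq_pow_mul_AherSum, AherSum_succ,
        AherSum_eq_zero (e := (0 : ℕ) - 1) fun l => by omega]
      ring
    · rw [show ((p + 1 : ℕ) : ℤ) + k - 2 * (e + 1 : ℕ) - 1 = p + k - 2 * (e + 1 : ℕ) by
          push_cast; ring,
        show ((p + 1 : ℕ) : ℤ) + k - 2 * (e + 1 : ℕ) + 1 = p + k - 2 * e by push_cast; ring,
        Aher_eq_pow_mul_AherSum, Aher_eq_pow_mul_AherSum, Aher_eq_pow_mul_AherSum, AherSum_succ,
        show ((e + 1 : ℕ) : ℤ) - 1 = e by push_cast; ring]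
      push_cast
      ring
  · rw [not_exists] at h
    rw [Aher_eq_zero_of_forall_ne h, Aher_eq_zero_of_forall_ne fun e he => h e (by omega),
      Aher_eq_zero_of_forall_ne fun e he => h (e + 1) (by omega)]
    ring

theorem Aher_zero (τ : ℝ) (n k : ℕ) : Aher τ 0 n k = if n = k then 1 else 0 := by
  split_ifs with h
  · subst h
    simpa [AherSum, AherTerm, invfac, zbinom] using Aher_eq_pow_mul_AherSum τ 0 n 0
  · rw [Aher, if_neg]
    rintro ⟨-, habs, -⟩
    rw [abs_le] at habs
    omega

namespace Polynomial

variable {R : Type*} [CommRing R]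

noncomputable def fischer : R[X] →ₗ[R] R[X] →ₗ[R] R :=
  (aeval (derivative : Module.End R R[X])).toLinearMap.compr₂ (leval 0)

theorem fischer_apply (f g : R[X]) :
    fischer f g = (aeval (derivative : Module.End R R[X]) f g).eval 0 :=
  rfl

theorem fischer_eq_sum {f : R[X]} {n : ℕ} (hn : f.natDegree < n) (g : R[X]) :
    fischer f g = ∑ i ∈ range n, (i ! : R) * f.coeff i * g.coeff i := by
  rw [fischer_apply, aeval_eq_sum_range' hn, LinearMap.sum_apply, eval_finsetSum]
  refine Finset.sum_congr rfl fun i _ => ?_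
  rw [LinearMap.smul_apply, Module.End.pow_apply, eval_smul, ← coeff_zero_eq_eval_zero,
    coeff_iterate_derivative, zero_add, Nat.descFactorial_self, nsmul_eq_mul, smul_eq_mul]
  ring

theorem fischer_comm (f g : R[X]) : fischer f g = fischer g f := by
  have hf : f.natDegree < f.natDegree + g.natDegree + 1 := by omega
  have hg : g.natDegree < f.natDegree + g.natDegree + 1 := by omega
  rw [fischer_eq_sum hf, fischer_eq_sum hg]
  exact Finset.sum_congr rfl fun i _ => by ring

theorem fischer_X_mul (f g : R[X]) : fischer (X * f) g = fischer f (derivative g) := by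
  rw [fischer_apply, fischer_apply, mul_comm, map_mul, aeval_X, Module.End.mul_apply]

end Polynomial

section Hermite

variable {R : Type*} [CommRing R] (τ : R)

/-- Multiplication by `z` on `∑ c_j P_j`, written in the basis `X^j ↔ P_j`:
`z P_j = P_{j+1} + τ j P_{j-1}`. -/
noncomputable def hermiteMulZ : Module.End R R[X] :=
  LinearMap.mulLeft R X + τ • derivative

theorem hermiteMulZ_apply (f : R[X]) : hermiteMulZ τ f = X * f + τ • derivative f :=
  rfl

theorem derivative_hermiteMulZ (f : R[X]) :
    derivative (hermiteMulZ τ f) = hermiteMulZ τ (derivative f) + f := by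
  simp only [hermiteMulZ_apply, map_add, map_smul, derivative_mul, derivative_X, one_mul]
  abel

theorem fischer_hermiteMulZ_sub (f g : R[X]) :
    fischer f (hermiteMulZ τ g) - τ * fischer (hermiteMulZ τ f) g =
      (1 - τ ^ 2) * fischer (derivative f) g := by
  rw [fischer_comm f, hermiteMulZ_apply, hermiteMulZ_apply]
  simp only [map_add, map_smul, LinearMap.add_apply, LinearMap.smul_apply, smul_eq_mul,
    fischer_X_mul]
  rw [fischer_comm (derivative g), fischer_comm g]
  ring

noncomputable def zPowHermite (p k : ℕ) : R[X] :=
  (hermiteMulZ τ ^ p) (X ^ k)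

theorem zPowHermite_zero (k : ℕ) : zPowHermite τ 0 k = X ^ k :=
  rfl

theorem zPowHermite_succ (p k : ℕ) :
    zPowHermite τ (p + 1) k = hermiteMulZ τ (zPowHermite τ p k) := by
  rw [zPowHermite, pow_succ', Module.End.mul_apply, zPowHermite]

theorem zPowHermite_succ_right (p k : ℕ) :
    zPowHermite τ p (k + 1) = zPowHermite τ (p + 1) k - (τ * k) • zPowHermite τ p (k - 1) := by
  induction p with
  | zero =>
    rw [zPowHermite_succ, zPowHermite_zero, zPowHermite_zero, zPowHermite_zero, hermiteMulZ_apply,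
      derivative_X_pow, C_mul', smul_smul, pow_succ']
    abel
  | succ p ih =>
    rw [zPowHermite_succ, ih, map_sub, map_smul, ← zPowHermite_succ, ← zPowHermite_succ]

theorem derivative_zPowHermite_succ (p k : ℕ) :
    derivative (zPowHermite τ (p + 1) k) =
      ((p : R) + 1) • zPowHermite τ p k + (k : R) • zPowHermite τ (p + 1) (k - 1) := by
  induction p with
  | zero =>
    rw [zPowHermite_succ, derivative_hermiteMulZ, zPowHermite_zero, derivative_X_pow, C_mul',
      map_smul, ← zPowHermite_zero, ← zPowHermite_succ]
    simp only [Nat.cast_zero, zero_add, one_smul]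
    abel
  | succ p ih =>
    rw [zPowHermite_succ τ (p + 1), derivative_hermiteMulZ, ih, map_add, map_smul, map_smul,
      ← zPowHermite_succ, ← zPowHermite_succ]
    push_cast
    module

theorem christoffel_darboux_recursion (a b M : ℕ) :
    fischer (zPowHermite τ (a + 1) M) (zPowHermite τ b (M + 1)) -
        τ * fischer (zPowHermite τ (a + 1) (M + 1)) (zPowHermite τ b M) =
      (1 - τ ^ 2) * ((a : R) + 1) * fischer (zPowHermite τ a M) (zPowHermite τ b M) +
        M * (fischer (zPowHermite τ (a + 1) (M - 1)) (zPowHermite τ b M) -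
          τ * fischer (zPowHermite τ (a + 1) M) (zPowHermite τ b (M - 1))) := by
  have h := fischer_hermiteMulZ_sub τ (zPowHermite τ (a + 1) M) (zPowHermite τ b M)
  rw [← zPowHermite_succ, ← zPowHermite_succ, derivative_zPowHermite_succ] at h
  rw [zPowHermite_succ_right τ b M, zPowHermite_succ_right τ (a + 1) M]
  simp only [map_add, map_sub, map_smul, LinearMap.add_apply, LinearMap.sub_apply,
    LinearMap.smul_apply, smul_eq_mul] at h ⊢
  linear_combination h

end Hermite

theorem sum_fischer_zPowHermite_div_factorial {K : Type*} [Field K] [CharZero K] (τ : K)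
    (a b M : ℕ) :
    (1 - τ ^ 2) * ((a : K) + 1) *
        ∑ k ∈ range (M + 1), fischer (zPowHermite τ a k) (zPowHermite τ b k) / k ! =
      (fischer (zPowHermite τ (a + 1) M) (zPowHermite τ b (M + 1)) -
        τ * fischer (zPowHermite τ (a + 1) (M + 1)) (zPowHermite τ b M)) / M ! := by
  induction M with
  | zero => simp [christoffel_darboux_recursion]
  | succ M ih =>
    rw [sum_range_succ, mul_add, ih, christoffel_darboux_recursion τ a b (M + 1),
      Nat.add_sub_cancel, Nat.factorial_succ]
    push_cast
    field_simp
    ring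

theorem coeff_zPowHermite (τ : ℝ) (p k n : ℕ) :
    (zPowHermite τ p k).coeff n = Aher τ p n k := by
  induction p generalizing n with
  | zero => rw [zPowHermite_zero, coeff_X_pow, Aher_zero]
  | succ p ih =>
    rw [zPowHermite_succ, hermiteMulZ_apply, coeff_add, coeff_smul, coeff_derivative, ih,
      Aher_succ, smul_eq_mul]
    rcases n with _ | n
    · rw [coeff_X_mul_zero, Aher_of_neg (j := ((0 : ℕ) : ℤ) - 1) (by norm_num)]
      push_cast
      ring
    · rw [coeff_X_mul, ih]
      push_cast
      ring_nf

theorem natDegree_zPowHermite_le (τ : ℝ) (p k : ℕ) : (zPowHermite τ p k).natDegree ≤ p + k :=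
  natDegree_le_iff_coeff_eq_zero.2 fun n hn => by
    rw [coeff_zPowHermite, Aher_eq_zero_of_forall_ne fun e => by omega]

theorem fischer_zPowHermite_eq_sum (τ : ℝ) {p k n : ℕ} (hn : p + k < n) (q m : ℕ) :
    fischer (zPowHermite τ p k) (zPowHermite τ q m) =
      ∑ i ∈ range n, (i ! : ℝ) * Aher τ p i k * Aher τ q i m := by
  simp only [fischer_eq_sum ((natDegree_zPowHermite_le τ p k).trans_lt hn), coeff_zPowHermite]

theorem Aher_ne_zero {τ : ℝ} {p k : ℕ} {j : ℤ} (h : Aher τ p j k ≠ 0) :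
    -(p : ℤ) ≤ j - k ∧ j - k ≤ p ∧ (j - k) % 2 = p % 2 := by
  by_contra hc
  rw [Aher, if_neg fun ⟨_, habs, hpar⟩ => hc ⟨(abs_le.1 habs).1, (abs_le.1 habs).2, hpar⟩] at h
  exact h rfl

theorem Mell_eq_sum_fischer (τ : ℝ) (p1 p2 N : ℕ) :
    Mell τ p1 p2 N =
      ∑ k ∈ range N, fischer (zPowHermite τ p1 k) (zPowHermite τ p2 k) / k ! := by
  refine sum_congr rfl fun k _ => ?_
  rw [fischer_zPowHermite_eq_sum τ (Nat.lt_succ_self (p1 + k)), sum_div]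
  refine sum_bij_ne_zero (fun r _ _ => (k - r).toNat) ?_ ?_ ?_ ?_
  · intro r hr _
    simp only [Ip, mem_filter, mem_Icc] at hr
    rw [mem_range]
    omega
  · intro r₁ hr₁ _ r₂ hr₂ _ h
    simp only [mem_filter] at hr₁ hr₂
    omega
  · intro n _ hne
    have hprod := (div_ne_zero_iff.1 hne).1
    obtain ⟨hlo₁, hhi₁, hpar₁⟩ := Aher_ne_zero (right_ne_zero_of_mul (left_ne_zero_of_mul hprod))
    obtain ⟨hlo₂, hhi₂, hpar₂⟩ := Aher_ne_zero (right_ne_zero_of_mul hprod)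
    refine ⟨k - n, ?_, ?_, by omega⟩
    · simp only [Ip, mem_filter, mem_Icc]
      omega
    · rw [show (k : ℤ) - (k - n) = n by ring, Int.toNat_natCast]
      exact fun h => hne (by rw [← h]; ring)
  · intro r hr _
    simp only [mem_filter] at hr
    rw [show (((k : ℤ) - r).toNat : ℤ) = k - r by omega]
    ring

/-- Christoffel–Darboux-type identity for the spectral moments of the complex
elliptic Ginibre ensemble:
`M_τ(p1,p2,N) = (1/((1−τ²)(p1+1))) ∑_{n=0}^{N+max(p1+1,p2)} (n!/(N−1)!)
  [A_τ(p1+1,n,N−1) A_τ(p2,n,N) − τ A_τ(p1+1,n,N) A_τ(p2,n,N−1)]`. -/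
theorem elliptic_moment_CD_identity (τ : ℝ) (hτ0 : 0 < τ) (hτ1 : τ < 1)
    (N : ℕ) (hN : 1 ≤ N) (p1 p2 : ℕ) :
    Mell τ p1 p2 N =
      (1 / ((1 - τ ^ 2) * ((p1 : ℝ) + 1))) *
        ∑ n ∈ Finset.range (N + max (p1 + 1) p2 + 1),
          ((n.factorial : ℝ) / ((N - 1).factorial : ℝ)) *
            (Aher τ (p1 + 1) (n : ℤ) (N - 1) * Aher τ p2 (n : ℤ) N
              - τ * Aher τ (p1 + 1) (n : ℤ) N * Aher τ p2 (n : ℤ) (N - 1)) := by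
  obtain ⟨M, rfl⟩ := Nat.exists_eq_add_of_le' hN
  have hτ : 1 - τ ^ 2 ≠ 0 := by nlinarith
  have hR : ∑ n ∈ range (M + 1 + max (p1 + 1) p2 + 1),
        ((n ! : ℝ) / (M ! : ℝ)) *
          (Aher τ (p1 + 1) n M * Aher τ p2 n (M + 1)
            - τ * Aher τ (p1 + 1) n (M + 1) * Aher τ p2 n M) =
      (fischer (zPowHermite τ (p1 + 1) M) (zPowHermite τ p2 (M + 1)) -
        τ * fischer (zPowHermite τ (p1 + 1) (M + 1)) (zPowHermite τ p2 M)) / M ! := by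
    rw [fischer_zPowHermite_eq_sum τ (n := M + 1 + max (p1 + 1) p2 + 1) (by omega),
      fischer_zPowHermite_eq_sum τ (n := M + 1 + max (p1 + 1) p2 + 1) (by omega), mul_sum,
      ← sum_sub_distrib, sum_div]
    exact sum_congr rfl fun n _ => by ring
  rw [Nat.add_sub_cancel, hR, Mell_eq_sum_fischer, ← sum_fischer_zPowHermite_div_factorial]
  field_simp
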